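/- arXiv:1201.3486 — 3 statements merged into one kernel-verified Lean document; each statement's English description precedes it below -/
import Mathlib

section
/- Let $n = p+q$ with $p>1$, $q\geq 1$, $R>0$, and let $w:[0,R]\to[0,\infty)$ be a $C^1$ function with $w(R)=0$. Set $K := \left(\int_0^R |w'(\tau)|^p \tau^{n-1-q}\,d\tau\right)^{1/p}$ and assume $K>0$. Then for every $s\in(0,R)$, $w(s) \leq K \left(\ln(R/s)\right)^{1/p'}$ where $p'=p/(p-1)$; consequently $\int_0^R \exp\left\{ (w(s)/K)^{p'} \right\} s^{n-1}\,ds \leq \frac{R^n}{n-1}$. -/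
/-!
By the fundamental theorem of calculus and `w R = 0`, `w s ≤ ∫ₛᴿ |w'|`. Writing
`|w'| = (|w'| τ^{1/p'}) · τ^{-1/p'}` and applying Hölder gives
`w s ≤ K (∫ₛᴿ τ⁻¹ dτ)^{1/p'} = K (log (R/s))^{1/p'}`, since `n - 1 - q = p - 1`.
Hence `exp ((w s / K)^{p'}) ≤ R / s`, so the integrand of the exponential integral is at most
`R s^{n-2}`, whose integral over `[0, R]` is `R^n / (n - 1)`.
-/

open Real MeasureTheory Set intervalIntegral

lemma ContinuousOn.memLp_restrict_Ioc {f : ℝ → ℝ} {a b : ℝ} (hf : ContinuousOn f (Icc a b))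
    (e : ENNReal) : MemLp f e (volume.restrict (Ioc a b)) := by
  obtain ⟨C, hC⟩ := isCompact_Icc.exists_bound_of_continuousOn hf
  refine MemLp.of_bound
    ((hf.mono Ioc_subset_Icc_self).aestronglyMeasurable measurableSet_Ioc) C ?_
  exact (ae_restrict_iff' measurableSet_Ioc).2
    (Filter.Eventually.of_forall fun x hx => hC x (Ioc_subset_Icc_self hx))

theorem intervalIntegral.integral_mul_le_Lp_mul_Lq_of_continuousOn {a b p q : ℝ} (hab : a ≤ b)
    (hpq : p.HolderConjugate q) {f g : ℝ → ℝ} (hf : ContinuousOn f (Icc a b))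
    (hg : ContinuousOn g (Icc a b)) (hf0 : ∀ x ∈ Icc a b, 0 ≤ f x)
    (hg0 : ∀ x ∈ Icc a b, 0 ≤ g x) :
    ∫ x in a..b, f x * g x ≤
      (∫ x in a..b, f x ^ p) ^ (1 / p) * (∫ x in a..b, g x ^ q) ^ (1 / q) := by
  have nonneg_ae {h : ℝ → ℝ} (h0 : ∀ x ∈ Icc a b, 0 ≤ h x) :
      0 ≤ᵐ[volume.restrict (Ioc a b)] h :=
    (ae_restrict_iff' measurableSet_Ioc).2
      (Filter.Eventually.of_forall fun x hx => h0 x (Ioc_subset_Icc_self hx))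
  simp only [integral_of_le hab]
  exact integral_mul_le_Lp_mul_Lq_of_nonneg hpq (nonneg_ae hf0) (nonneg_ae hg0)
    (hf.memLp_restrict_Ioc _) (hg.memLp_restrict_Ioc _)

theorem integral_abs_le_weighted_mul_log_rpow {p p' s R : ℝ} (hpq : p.HolderConjugate p')
    (hs : 0 < s) (hsR : s ≤ R) {g : ℝ → ℝ} (hg : ContinuousOn g (Icc s R)) :
    ∫ τ in s..R, |g τ| ≤
      (∫ τ in s..R, |g τ| ^ p * τ ^ (p - 1)) ^ (1 / p) * log (R / s) ^ (1 / p') := by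
  set a := 1 / p'
  have hpos : ∀ τ ∈ uIcc s R, 0 < τ := fun τ hτ => hs.trans_le (by simpa [hsR] using hτ.1)
  have hap : a * p = p - 1 := by
    rw [← hpq.div_conj_eq_sub_one]; ring
  have hap' : a * p' = 1 := one_div_mul_cancel hpq.symm.ne_zero
  have hholder := integral_mul_le_Lp_mul_Lq_of_continuousOn hsR hpq
    (f := fun τ => |g τ| * τ ^ a) (g := fun τ => τ ^ (-a))
    (hg.abs.mul
      (continuousOn_id.rpow_const fun _ _ => Or.inr (one_div_nonneg.2 hpq.symm.nonneg)))
    (continuousOn_id.rpow_const fun x hx => Or.inl (hs.trans_le hx.1).ne')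
    (fun x hx => by have := (hs.trans_le hx.1).le; positivity)
    (fun x hx => by have := (hs.trans_le hx.1).le; positivity)
  calc ∫ τ in s..R, |g τ| = ∫ τ in s..R, |g τ| * τ ^ a * τ ^ (-a) :=
        integral_congr fun τ hτ => by
          rw [mul_assoc, ← rpow_add (hpos τ hτ), add_neg_cancel, rpow_zero, mul_one]
    _ ≤ _ := hholder
    _ = (∫ τ in s..R, |g τ| ^ p * τ ^ (p - 1)) ^ (1 / p) *
          (∫ τ in s..R, τ⁻¹) ^ (1 / p') := by
        congr 2
        · refine integral_congr fun τ hτ => ?_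
          rw [mul_rpow (abs_nonneg _) (by have := (hpos τ hτ).le; positivity),
            ← rpow_mul (hpos τ hτ).le, hap]
        · refine integral_congr fun τ hτ => ?_
          rw [← rpow_mul (hpos τ hτ).le, neg_mul, hap', rpow_neg_one]
    _ = _ := by rw [integral_inv_of_pos hs (hs.trans_le hsR)]

theorem apply_le_integral_abs_derivWithin {w : ℝ → ℝ} {R s : ℝ}
    (hw : ContDiffOn ℝ 1 w (Icc 0 R)) (hwR : w R = 0) (hs : 0 < s) (hsR : s ≤ R) :
    w s ≤ ∫ τ in s..R, |derivWithin w (Icc 0 R) τ| := by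
  have hsub : Icc s R ⊆ Icc 0 R := Icc_subset_Icc hs.le le_rfl
  have hw' : ContinuousOn (derivWithin w (Icc 0 R)) (Icc s R) :=
    (hw.continuousOn_derivWithin (uniqueDiffOn_Icc (hs.trans_le hsR)) le_rfl).mono hsub
  have hftc : ∫ τ in s..R, derivWithin w (Icc 0 R) τ = w R - w s := by
    refine integral_eq_sub_of_hasDeriv_right_of_le hsR (hw.continuousOn.mono hsub)
      (fun x hx => ?_) (hw'.intervalIntegrable_of_Icc hsR)
    have hx0 : Icc 0 R ∈ nhds x := Icc_mem_nhds (hs.trans hx.1) hx.2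
    exact ((hw.differentiableOn one_ne_zero x (mem_of_mem_nhds hx0)).hasDerivWithinAt.hasDerivAt
      hx0).hasDerivWithinAt
  calc w s = -∫ τ in s..R, derivWithin w (Icc 0 R) τ := by rw [hftc, hwR]; ring
    _ ≤ |∫ τ in s..R, derivWithin w (Icc 0 R) τ| := neg_le_abs _
    _ ≤ ∫ τ in s..R, |derivWithin w (Icc 0 R) τ| := abs_integral_le_integral_abs hsR

theorem apply_le_weighted_integral_rpow_mul_log_rpow {p p' R s : ℝ}
    (hpq : p.HolderConjugate p') {w : ℝ → ℝ} (hw : ContDiffOn ℝ 1 w (Icc 0 R))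
    (hwR : w R = 0) (hs : 0 < s) (hsR : s ≤ R) :
    w s ≤ (∫ τ in (0 : ℝ)..R, |derivWithin w (Icc 0 R) τ| ^ p * τ ^ (p - 1)) ^ (1 / p) *
      log (R / s) ^ (1 / p') := by
  have hw' : ContinuousOn (derivWithin w (Icc 0 R)) (Icc 0 R) :=
    hw.continuousOn_derivWithin (uniqueDiffOn_Icc (hs.trans_le hsR)) le_rfl
  have hweight :
      ContinuousOn (fun τ => |derivWithin w (Icc 0 R) τ| ^ p * τ ^ (p - 1)) (Icc 0 R) :=
    (hw'.abs.rpow_const fun _ _ => Or.inr hpq.nonneg).mul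
      (continuousOn_id.rpow_const fun _ _ => Or.inr hpq.sub_one_pos.le)
  have hweight0 : ∀ τ ∈ Icc 0 R, 0 ≤ |derivWithin w (Icc 0 R) τ| ^ p * τ ^ (p - 1) :=
    fun τ hτ => by have := hτ.1; positivity
  have hIs : 0 ≤ ∫ τ in s..R, |derivWithin w (Icc 0 R) τ| ^ p * τ ^ (p - 1) :=
    integral_nonneg hsR fun τ hτ => hweight0 τ ⟨hs.le.trans hτ.1, hτ.2⟩
  calc w s ≤ ∫ τ in s..R, |derivWithin w (Icc 0 R) τ| :=
        apply_le_integral_abs_derivWithin hw hwR hs hsR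
    _ ≤ _ := integral_abs_le_weighted_mul_log_rpow hpq hs hsR
        (hw'.mono (Icc_subset_Icc hs.le le_rfl))
    _ ≤ _ := by
        refine mul_le_mul_of_nonneg_right (rpow_le_rpow hIs ?_ (one_div_nonneg.2 hpq.nonneg))
          (rpow_nonneg (log_nonneg ((one_le_div hs).2 hsR)) _)
        exact integral_mono_interval hs.le hsR le_rfl
          ((ae_restrict_iff' measurableSet_Ioc).2 (Filter.Eventually.of_forall
            fun τ hτ => hweight0 τ (Ioc_subset_Icc_self hτ)))
          (hweight.intervalIntegrable_of_Icc (hs.le.trans hsR))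

theorem exp_div_rpow_le_div {K p' R s u : ℝ} (hK : 0 < K) (hp' : 0 < p') (hs : 0 < s)
    (hsR : s ≤ R) (hu : 0 ≤ u) (h : u ≤ K * log (R / s) ^ (1 / p')) :
    exp ((u / K) ^ p') ≤ R / s := by
  have hlog : 0 ≤ log (R / s) := log_nonneg ((one_le_div hs).2 hsR)
  have hexponent : (u / K) ^ p' ≤ log (R / s) :=
    calc (u / K) ^ p' ≤ (log (R / s) ^ (1 / p')) ^ p' :=
          rpow_le_rpow (div_nonneg hu hK.le) ((div_le_iff₀' hK).2 h) hp'.le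
      _ = log (R / s) := by rw [← rpow_mul hlog, one_div_mul_cancel hp'.ne', rpow_one]
  simpa [exp_log (div_pos (hs.trans_le hsR) hs)] using exp_le_exp.2 hexponent

theorem integral_mul_rpow_le_of_le_div {f : ℝ → ℝ} {R n : ℝ} (hR : 0 < R) (hn : 1 < n)
    (hf : ContinuousOn f (Icc 0 R)) (hle : ∀ s ∈ Ioc 0 R, f s ≤ R / s) :
    ∫ s in (0 : ℝ)..R, f s * s ^ (n - 1) ≤ R ^ n / (n - 1) := by
  have hn1 : n - 1 ≠ 0 := (sub_pos.2 hn).ne'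
  have hpointwise : ∀ s ∈ Icc 0 R, f s * s ^ (n - 1) ≤ R * s ^ (n - 2) := by
    rintro s ⟨hs0, hsR⟩
    rcases hs0.eq_or_lt with rfl | hs
    · rw [zero_rpow hn1, mul_zero]; positivity
    calc f s * s ^ (n - 1) ≤ R / s * s ^ (n - 1) :=
          mul_le_mul_of_nonneg_right (hle s ⟨hs, hsR⟩) (by positivity)
      _ = R * s ^ (n - 2) := by
          rw [show n - 2 = n - 1 - 1 by ring, rpow_sub_one hs.ne' (n - 1)]; ring
  have hcont : ContinuousOn (fun s => f s * s ^ (n - 1)) (Icc 0 R) :=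
    hf.mul (continuousOn_id.rpow_const fun _ _ => Or.inr (sub_pos.2 hn).le)
  calc ∫ s in (0 : ℝ)..R, f s * s ^ (n - 1) ≤ ∫ s in (0 : ℝ)..R, R * s ^ (n - 2) :=
        integral_mono_on hR.le (hcont.intervalIntegrable_of_Icc hR.le)
          ((intervalIntegrable_rpow' (by linarith)).const_mul R) hpointwise
    _ = R ^ n / (n - 1) := by
        rw [intervalIntegral.integral_const_mul, integral_rpow (Or.inl (by linarith)),
          show n - 2 + 1 = n - 1 by ring, zero_rpow hn1, sub_zero, rpow_sub_one hR.ne']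
        field_simp

/-- Critical case `n = p + q` (Moser–Trudinger type): logarithmic pointwise bound
and exponential integral bound for a `C¹` profile `w` on `[0,R]` with `w R = 0`. -/
theorem stmt1 (n p q R K : ℝ) (hp : 1 < p) (hq : 1 ≤ q) (hn : n = p + q)
    (hR : 0 < R) (w : ℝ → ℝ) (hw : ContDiffOn ℝ 1 w (Set.Icc 0 R))
    (hwpos : ∀ t ∈ Set.Icc (0 : ℝ) R, 0 ≤ w t) (hwR : w R = 0)
    (hK : K = (∫ τ in (0 : ℝ)..R,
      |derivWithin w (Set.Icc 0 R) τ| ^ p * τ ^ (n - 1 - q)) ^ (1 / p))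
    (hKpos : 0 < K) :
    (∀ s ∈ Set.Ioo (0 : ℝ) R,
      w s ≤ K * (Real.log (R / s)) ^ (1 / (p / (p - 1)))) ∧
    (∫ s in (0 : ℝ)..R, Real.exp ((w s / K) ^ (p / (p - 1))) * s ^ (n - 1)) ≤
      R ^ n / (n - 1) := by
  have hpq : p.HolderConjugate (p / (p - 1)) := .conjExponent hp
  rw [show n - 1 - q = p - 1 by rw [hn]; ring] at hK
  have hbound : ∀ s, 0 < s → s ≤ R → w s ≤ K * log (R / s) ^ (1 / (p / (p - 1))) :=
    fun s hs hsR => hK ▸ apply_le_weighted_integral_rpow_mul_log_rpow hpq hw hwR hs hsR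
  refine ⟨fun s hs => hbound s hs.1 hs.2.le, ?_⟩
  refine integral_mul_rpow_le_of_le_div hR (by linarith)
    ((hw.continuousOn.div_const K).rpow_const (fun _ _ => Or.inr hpq.symm.nonneg)).rexp
    fun s hs => ?_
  exact exp_div_rpow_le_div hKpos hpq.symm.pos hs.1 hs.2 (hwpos s (Ioc_subset_Icc_self hs))
    (hbound s hs.1 hs.2)
end

section
/- Let $n>3$, $\bar M > s > 0$, $C>0$, and let $\psi:[0,\bar M]\to(0,\infty)$ be continuous. Define $\eta:[0,\bar M]\to\mathbb{R}$ by $\eta(t)=t/s$ for $0\leq t\leq s$ and $\eta(t) = \exp\left(\frac{1}{\sqrt 2}\int_s^t \left(C\psi(\tau)^{-2/(n-1)}\right)^{1/2} d\tau\right)$ for $s< t\leq \bar M$. Suppose $C\int_0^{\bar M} \psi(t)^{(n-3)/(n-1)}\eta(t)^2\,dt \leq \int_0^{\bar M} \psi(t)\,\dot\eta(t)^2\,dt$. Then $\bar M - s \leq \left(\frac{2}{Cs^2}\int_0^s \psi(t)\,dt\cdot s^2\Big/ s^2 \right)^{1/(n-2)}\left(\sqrt{\tfrac2C}\,\frac{n-3}{2}\right)^{(n-3)/(n-2)}$,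 i.e., $\bar M - s \leq \left(\frac{2}{C}\int_0^{s}\frac{\psi(t)}{s^2}\,dt\right)^{1/(n-2)} \left(\sqrt{\tfrac2C}\,\frac{n-3}{2}\right)^{(n-3)/(n-2)}$. -/
open Real MeasureTheory Set intervalIntegral

/-!
On `(s, M̄)` the test function solves `η' = ρ η` with `ρ = √(C/2) ψ^{-1/(n-1)}`, so there
`ψ η'² = (C/2) u` for `u = ψ^{(n-3)/(n-1)} η²`, while `ψ η'² = ψ / s²` on `(0, s)`. The stability
inequality thus gives `∫_s^M̄ u ≤ (2/C) ∫_0^s ψ / s²`. Hölder's inequality with exponents `n - 2`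
and `(n-2)/(n-3)`, applied to `1 = u^{1/(n-2)} u^{-1/(n-2)}`, bounds `M̄ - s` by
`(∫ u)^{1/(n-2)} (∫ u^{-1/(n-3)})^{(n-3)/(n-2)}`, and
`u^{-1/(n-3)} = √(2/C) ρ e^{-(2/(n-3)) ∫_s^t ρ}` is an exact derivative whose integral is at
most `√(2/C) (n-3)/2`.
-/

section Primitive

variable {ρ : ℝ → ℝ} {a b : ℝ}

theorem hasDerivAt_integral_of_continuousOn_Icc (hρ : ContinuousOn ρ (Icc a b)) {t : ℝ}
    (ht : t ∈ Ioo a b) : HasDerivAt (fun x => ∫ τ in a..x, ρ τ) (ρ t) t :=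
  integral_hasDerivAt_right
    ((hρ.mono (Icc_subset_Icc_right ht.2.le)).intervalIntegrable_of_Icc ht.1.le)
    ((hρ.mono Ioo_subset_Icc_self).stronglyMeasurableAtFilter isOpen_Ioo t ht)
    (hρ.continuousAt (Icc_mem_nhds ht.1 ht.2))

theorem continuousOn_integral_of_continuousOn_Icc (hab : a ≤ b) (hρ : ContinuousOn ρ (Icc a b)) :
    ContinuousOn (fun x => ∫ τ in a..x, ρ τ) (Icc a b) := by
  simpa only [uIcc_of_le hab] using
    continuousOn_primitive_interval (hρ.integrableOn_Icc.mono_set (uIcc_of_le hab).subset)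

theorem integral_mul_exp_neg_mul_integral_le (hab : a ≤ b) (hρ : ContinuousOn ρ (Icc a b))
    {γ : ℝ} (hγ : 0 < γ) :
    ∫ t in a..b, ρ t * exp (-γ * ∫ τ in a..t, ρ τ) ≤ 1 / γ := by
  have hF := continuousOn_integral_of_continuousOn_Icc hab hρ
  have hE : ContinuousOn (fun t => exp (-γ * ∫ τ in a..t, ρ τ)) (Icc a b) :=
    (continuousOn_const.mul hF).rexp
  have hFTC : ∫ t in a..b, ρ t * exp (-γ * ∫ τ in a..t, ρ τ) =
      -(1 / γ) * exp (-γ * ∫ τ in a..b, ρ τ) - -(1 / γ) * exp (-γ * ∫ τ in a..a, ρ τ) := by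
    refine integral_eq_sub_of_hasDerivAt_of_le hab (continuousOn_const.mul hE)
      (fun t ht => ?_) ((hρ.mul hE).intervalIntegrable_of_Icc hab)
    refine ((((hasDerivAt_integral_of_continuousOn_Icc hρ ht).const_mul (-γ)).exp).const_mul
      (-(1 / γ))).congr_deriv ?_
    field_simp
  rw [hFTC, integral_same, mul_zero, exp_zero]
  have := exp_pos (-γ * ∫ τ in a..b, ρ τ)
  have : 0 < 1 / γ := one_div_pos.mpr hγ
  nlinarith

end Primitive

theorem sub_le_integral_mul_integral_rpow_neg {u : ℝ → ℝ} {a b p q : ℝ} (hab : a ≤ b)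
    (hpq : p.HolderConjugate q) (hu : ContinuousOn u (Icc a b))
    (hpos : ∀ t ∈ Icc a b, 0 < u t) :
    b - a ≤ (∫ t in a..b, u t) ^ (1 / p) * (∫ t in a..b, u t ^ (-(q / p))) ^ (1 / q) := by
  have hIcc (f : ℝ → ℝ) : ∫ t in a..b, f t = ∫ t in Icc a b, f t := by
    rw [integral_of_le hab, integral_Icc_eq_integral_Ioc]
  have hmemLp {f : ℝ → ℝ} (hf : ContinuousOn f (Icc a b)) (r : ENNReal) :
      MemLp f r (volume.restrict (Icc a b)) := by
    obtain ⟨B, hB⟩ := isCompact_Icc.exists_bound_of_continuousOn hf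
    exact MemLp.of_bound (hf.aestronglyMeasurable measurableSet_Icc) B
      ((ae_restrict_mem measurableSet_Icc).mono hB)
  have hpos' : ∀ᵐ t ∂volume.restrict (Icc a b), 0 < u t :=
    (ae_restrict_mem measurableSet_Icc).mono hpos
  have hcont (r : ℝ) : ContinuousOn (fun t => u t ^ r) (Icc a b) :=
    hu.rpow_const fun t ht => Or.inl (hpos t ht).ne'
  have holder := integral_mul_le_Lp_mul_Lq_of_nonneg hpq
    (hpos'.mono fun t ht => (rpow_pos_of_pos ht (1 / p)).le)
    (hpos'.mono fun t ht => (rpow_pos_of_pos ht (-(1 / p))).le)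
    (hmemLp (hcont _) _) (hmemLp (hcont _) _)
  have hp : p ≠ 0 := hpq.ne_zero
  have hone : EqOn (fun t => u t ^ (1 / p) * u t ^ (-(1 / p))) (fun _ => 1) (Icc a b) :=
    fun t ht => by simp [← rpow_add (hpos t ht)]
  have hfp : EqOn (fun t => (u t ^ (1 / p)) ^ p) u (Icc a b) := fun t ht => by
    simp [← rpow_mul (hpos t ht).le, hp]
  have hgq : EqOn (fun t => (u t ^ (-(1 / p))) ^ q) (fun t => u t ^ (-(q / p))) (Icc a b) :=
    fun t ht => by simp only [← rpow_mul (hpos t ht).le]; ring_nf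
  rw [setIntegral_congr_fun measurableSet_Icc hone, setIntegral_congr_fun measurableSet_Icc hfp,
    setIntegral_congr_fun measurableSet_Icc hgq] at holder
  rw [hIcc, hIcc]
  simpa [hab] using holder

theorem one_div_sqrt_two_mul_sqrt_mul_rpow {x : ℝ} (hx : 0 < x) (C : ℝ) {n : ℝ} :
    1 / √2 * √(C * x ^ (-(2 : ℝ) / (n - 1))) = √(C / 2) * x ^ (-1 / (n - 1)) := by
  have hsq : x ^ (-(2 : ℝ) / (n - 1)) = (x ^ (-1 / (n - 1))) ^ 2 := by
    rw [← rpow_natCast, ← rpow_mul hx.le]; ring_nf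
  rw [hsq, sqrt_mul' _ (sq_nonneg _), sqrt_sq (rpow_nonneg hx.le _), sqrt_div' _ zero_le_two]
  ring

theorem mul_sq_mul_sqrt_div_two_mul_rpow {x : ℝ} (hx : 0 < x) (y : ℝ) {n C : ℝ} (hn : n ≠ 1)
    (hC : 0 ≤ C) :
    x * (y * (√(C / 2) * x ^ (-1 / (n - 1)))) ^ 2 = C / 2 * (x ^ ((n - 3) / (n - 1)) * y ^ 2) := by
  have hn' : n - 1 ≠ 0 := sub_ne_zero.mpr hn
  have hx2 : x * (x ^ (-1 / (n - 1))) ^ 2 = x ^ ((n - 3) / (n - 1)) := by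
    rw [mul_comm, ← rpow_natCast, ← rpow_mul hx.le, ← rpow_add_one hx.ne']
    congr 1
    field_simp
    push_cast
    ring
  rw [mul_pow, mul_pow, sq_sqrt (div_nonneg hC zero_le_two), ← hx2]
  ring

theorem rpow_mul_exp_sq_rpow_neg_eq {x : ℝ} (hx : 0 < x) (F : ℝ) {n C : ℝ} (hn1 : n ≠ 1)
    (hn3 : n ≠ 3) (hC : 0 < C) :
    (x ^ ((n - 3) / (n - 1)) * exp F ^ 2) ^ (-(1 / (n - 3))) =
      √(2 / C) * (√(C / 2) * x ^ (-1 / (n - 1)) * exp (-(2 / (n - 3)) * F)) := by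
  have h1 : n - 1 ≠ 0 := sub_ne_zero.mpr hn1
  have h3 : n - 3 ≠ 0 := sub_ne_zero.mpr hn3
  have hsqrt : √(2 / C) * √(C / 2) = 1 := by
    rw [← sqrt_mul (by positivity), div_mul_div_comm, mul_comm 2 C, div_self (by positivity),
      sqrt_one]
  rw [mul_rpow (rpow_nonneg hx.le _) (sq_nonneg _), ← rpow_mul hx.le, ← rpow_natCast (exp F),
    ← rpow_mul (exp_pos F).le, ← exp_mul,
    show (n - 3) / (n - 1) * -(1 / (n - 3)) = -1 / (n - 1) by field_simp,
    show F * ((2 : ℕ) * -(1 / (n - 3))) = -(2 / (n - 3)) * F by push_cast; ring]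
  linear_combination (-(x ^ (-1 / (n - 1)) * exp (-(2 / (n - 3)) * F))) * hsqrt

noncomputable def testFunction (n s C : ℝ) (ψ : ℝ → ℝ) (t : ℝ) : ℝ :=
  if t ≤ s then t / s
  else exp ((1 / √2) * ∫ τ in s..t, √(C * ψ τ ^ (-(2 : ℝ) / (n - 1))))

noncomputable def testRate (n C : ℝ) (ψ : ℝ → ℝ) (t : ℝ) : ℝ := √(C / 2) * ψ t ^ (-1 / (n - 1))

section TestFunction

variable {n s M C : ℝ} {ψ : ℝ → ℝ}

theorem testFunction_of_le {t : ℝ} (ht : t ≤ s) : testFunction n s C ψ t = t / s := if_pos ht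

theorem continuousOn_testRate {S : Set ℝ} (hψc : ContinuousOn ψ S) (hψ : ∀ t ∈ S, 0 < ψ t) :
    ContinuousOn (testRate n C ψ) S :=
  continuousOn_const.mul (hψc.rpow_const fun t ht => Or.inl (hψ t ht).ne')

theorem testFunction_eq_exp_integral (hs : 0 < s) (hψ : ∀ t ∈ Icc s M, 0 < ψ t) {t : ℝ}
    (ht : t ∈ Icc s M) : testFunction n s C ψ t = exp (∫ τ in s..t, testRate n C ψ τ) := by
  rcases ht.1.eq_or_lt with rfl | hst
  · rw [testFunction_of_le le_rfl, div_self hs.ne', integral_same, exp_zero]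
  rw [testFunction, if_neg hst.not_ge, ← intervalIntegral.integral_const_mul]
  refine congrArg exp (integral_congr fun τ hτ => ?_)
  rw [uIcc_of_le hst.le] at hτ
  exact one_div_sqrt_two_mul_sqrt_mul_rpow (hψ τ ⟨hτ.1, hτ.2.trans ht.2⟩) C

theorem testFunction_pos (hs : 0 < s) (hψ : ∀ t ∈ Icc s M, 0 < ψ t) {t : ℝ}
    (ht : t ∈ Icc s M) : 0 < testFunction n s C ψ t := by
  rw [testFunction_eq_exp_integral hs hψ ht]; exact exp_pos _

theorem continuousOn_testFunction (hs : 0 < s) (hsM : s ≤ M) (hψc : ContinuousOn ψ (Icc s M))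
    (hψ : ∀ t ∈ Icc s M, 0 < ψ t) : ContinuousOn (testFunction n s C ψ) (Icc s M) :=
  ((continuousOn_integral_of_continuousOn_Icc hsM (continuousOn_testRate hψc hψ)).rexp).congr
    fun _ ht => testFunction_eq_exp_integral hs hψ ht

theorem deriv_testFunction_of_lt {t : ℝ} (ht : t < s) :
    deriv (testFunction n s C ψ) t = 1 / s := by
  have : testFunction n s C ψ =ᶠ[nhds t] fun x => x / s :=
    Filter.eventually_of_mem (Iio_mem_nhds ht) fun x hx => testFunction_of_le hx.le
  rw [this.deriv_eq]
  simp

theorem hasDerivAt_testFunction (hs : 0 < s) (hψc : ContinuousOn ψ (Icc s M))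
    (hψ : ∀ t ∈ Icc s M, 0 < ψ t) {t : ℝ} (ht : t ∈ Ioo s M) :
    HasDerivAt (testFunction n s C ψ) (testFunction n s C ψ t * testRate n C ψ t) t := by
  have heq : (fun x => exp (∫ τ in s..x, testRate n C ψ τ)) =ᶠ[nhds t] testFunction n s C ψ :=
    Filter.eventually_of_mem (Ioo_mem_nhds ht.1 ht.2) fun x hx =>
      (testFunction_eq_exp_integral hs hψ (Ioo_subset_Icc_self hx)).symm
  rw [testFunction_eq_exp_integral hs hψ (Ioo_subset_Icc_self ht)]
  exact ((hasDerivAt_integral_of_continuousOn_Icc (continuousOn_testRate hψc hψ) ht).exp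
    ).congr_of_eventuallyEq heq.symm

theorem integral_mul_deriv_testFunction_sq (hn : n ≠ 1) (hs : 0 < s) (hsM : s ≤ M) (hC : 0 ≤ C)
    (hψc : ContinuousOn ψ (Icc 0 M)) (hψ : ∀ t ∈ Icc s M, 0 < ψ t) :
    ∫ t in 0..M, ψ t * deriv (testFunction n s C ψ) t ^ 2 =
      (∫ t in 0..s, ψ t / s ^ 2) +
        C / 2 * ∫ t in s..M, ψ t ^ ((n - 3) / (n - 1)) * testFunction n s C ψ t ^ 2 := by
  have hψc' := hψc.mono (Icc_subset_Icc hs.le le_rfl)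
  have hleft : EqOn (fun t => ψ t * deriv (testFunction n s C ψ) t ^ 2) (fun t => ψ t / s ^ 2)
      (uIoo 0 s) := by
    rw [uIoo_of_le hs.le]
    intro t ht
    simp only [deriv_testFunction_of_lt ht.2]
    ring
  have hright : EqOn (fun t => ψ t * deriv (testFunction n s C ψ) t ^ 2)
      (fun t => C / 2 * (ψ t ^ ((n - 3) / (n - 1)) * testFunction n s C ψ t ^ 2)) (uIoo s M) := by
    rw [uIoo_of_le hsM]
    intro t ht
    simp only [(hasDerivAt_testFunction hs hψc' hψ ht).deriv]
    exact mul_sq_mul_sqrt_div_two_mul_rpow (hψ t (Ioo_subset_Icc_self ht)) _ hn hC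
  have hintL : IntervalIntegrable (fun t => ψ t / s ^ 2) volume 0 s :=
    ((hψc.mono (Icc_subset_Icc le_rfl hsM)).div_const _).intervalIntegrable_of_Icc hs.le
  have hintR : IntervalIntegrable
      (fun t => C / 2 * (ψ t ^ ((n - 3) / (n - 1)) * testFunction n s C ψ t ^ 2)) volume s M :=
    (continuousOn_const.mul ((hψc'.rpow_const fun t ht => Or.inl (hψ t ht).ne').mul
      ((continuousOn_testFunction hs hsM hψc' hψ).pow 2))).intervalIntegrable_of_Icc hsM
  rw [← integral_add_adjacent_intervals (hintL.congr_uIoo hleft.symm)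
    (hintR.congr_uIoo hright.symm), integral_congr_uIoo hleft, integral_congr_uIoo hright,
    intervalIntegral.integral_const_mul]

theorem integral_rpow_mul_testFunction_sq_le (hn : n ≠ 1) (hs : 0 < s) (hsM : s ≤ M) (hC : 0 < C)
    (hψc : ContinuousOn ψ (Icc 0 M)) (hψ : ∀ t ∈ Icc 0 M, 0 < ψ t)
    (hstab : C * ∫ t in 0..M, ψ t ^ ((n - 3) / (n - 1)) * testFunction n s C ψ t ^ 2 ≤
      ∫ t in 0..M, ψ t * deriv (testFunction n s C ψ) t ^ 2) :
    ∫ t in s..M, ψ t ^ ((n - 3) / (n - 1)) * testFunction n s C ψ t ^ 2 ≤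
      2 / C * ∫ t in 0..s, ψ t / s ^ 2 := by
  have hψ' : ∀ t ∈ Icc s M, 0 < ψ t := fun t ht => hψ t ⟨hs.le.trans ht.1, ht.2⟩
  have hw : ContinuousOn (fun t => ψ t ^ ((n - 3) / (n - 1))) (Icc 0 M) :=
    hψc.rpow_const fun t ht => Or.inl (hψ t ht).ne'
  have hηL : ContinuousOn (testFunction n s C ψ) (Icc 0 s) :=
    (continuousOn_id.div_const s).congr fun t ht => testFunction_of_le ht.2
  have hηR := continuousOn_testFunction (n := n) (C := C) hs hsM
    (hψc.mono (Icc_subset_Icc hs.le le_rfl)) hψ'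
  have hL : IntervalIntegrable
      (fun t => ψ t ^ ((n - 3) / (n - 1)) * testFunction n s C ψ t ^ 2) volume 0 s :=
    ((hw.mono (Icc_subset_Icc le_rfl hsM)).mul (hηL.pow 2)).intervalIntegrable_of_Icc hs.le
  have hR : IntervalIntegrable
      (fun t => ψ t ^ ((n - 3) / (n - 1)) * testFunction n s C ψ t ^ 2) volume s M :=
    ((hw.mono (Icc_subset_Icc hs.le le_rfl)).mul (hηR.pow 2)).intervalIntegrable_of_Icc hsM
  have hL_nonneg : 0 ≤ ∫ t in 0..s, ψ t ^ ((n - 3) / (n - 1)) * testFunction n s C ψ t ^ 2 :=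
    integral_nonneg hs.le fun t ht =>
      mul_nonneg (rpow_nonneg (hψ t ⟨ht.1, ht.2.trans hsM⟩).le _) (sq_nonneg _)
  rw [← integral_add_adjacent_intervals hL hR,
    integral_mul_deriv_testFunction_sq hn hs hsM hC.le hψc hψ'] at hstab
  rw [div_mul_eq_mul_div, le_div_iff₀ hC]
  nlinarith [mul_nonneg hC.le hL_nonneg]

theorem integral_rpow_mul_testFunction_sq_rpow_neg_le (hn : 3 < n) (hs : 0 < s) (hsM : s ≤ M)
    (hC : 0 < C) (hψc : ContinuousOn ψ (Icc s M)) (hψ : ∀ t ∈ Icc s M, 0 < ψ t) :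
    ∫ t in s..M, (ψ t ^ ((n - 3) / (n - 1)) * testFunction n s C ψ t ^ 2) ^ (-(1 / (n - 3))) ≤
      √(2 / C) * (n - 3) / 2 := by
  have hn3 : 0 < n - 3 := by linarith
  have heq : ∫ t in s..M,
        (ψ t ^ ((n - 3) / (n - 1)) * testFunction n s C ψ t ^ 2) ^ (-(1 / (n - 3))) =
      √(2 / C) * ∫ t in s..M,
        testRate n C ψ t * exp (-(2 / (n - 3)) * ∫ τ in s..t, testRate n C ψ τ) := by
    rw [← intervalIntegral.integral_const_mul]
    refine integral_congr fun t ht => ?_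
    rw [uIcc_of_le hsM] at ht
    simp only [testFunction_eq_exp_integral hs hψ ht]
    exact rpow_mul_exp_sq_rpow_neg_eq (hψ t ht) _ (by linarith) (by linarith) hC
  rw [heq, mul_div_assoc, show (n - 3) / 2 = 1 / (2 / (n - 3)) by field_simp]
  exact mul_le_mul_of_nonneg_left
    (integral_mul_exp_neg_mul_integral_le hsM (continuousOn_testRate hψc hψ) (by positivity))
    (sqrt_nonneg _)

end TestFunction

/-- One-dimensional core of the critical case `n = p + 2` of the `L^∞` estimate
for stable solutions: the stability-type inequality with the explicit exponential
test function `η` bounds `M̄ - s`. -/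
theorem stmt7 (n : ℝ) (hn : 3 < n) (M s C : ℝ) (hs : 0 < s) (hsM : s < M)
    (hC : 0 < C) (ψ : ℝ → ℝ) (hψc : ContinuousOn ψ (Set.Icc 0 M))
    (hψpos : ∀ t ∈ Set.Icc (0 : ℝ) M, 0 < ψ t)
    (η : ℝ → ℝ)
    (hη : ∀ t, η t = if t ≤ s then t / s
      else Real.exp ((1 / Real.sqrt 2) *
        ∫ τ in s..t, Real.sqrt (C * ψ τ ^ (-(2 : ℝ) / (n - 1)))))
    (hstab : C * ∫ t in (0 : ℝ)..M, ψ t ^ ((n - 3) / (n - 1)) * η t ^ 2 ≤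
      ∫ t in (0 : ℝ)..M, ψ t * (deriv η t) ^ 2) :
    M - s ≤ ((2 / C) * ∫ t in (0 : ℝ)..s, ψ t / s ^ 2) ^ ((1 : ℝ) / (n - 2)) *
      (Real.sqrt (2 / C) * (n - 3) / 2) ^ ((n - 3) / (n - 2)) := by
  obtain rfl : η = testFunction n s C ψ := funext hη
  have hn2 : 0 < n - 2 := by linarith
  have hψc' : ContinuousOn ψ (Icc s M) := hψc.mono (Icc_subset_Icc hs.le le_rfl)
  have hψ' : ∀ t ∈ Icc s M, 0 < ψ t := fun t ht => hψpos t ⟨hs.le.trans ht.1, ht.2⟩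
  have hu : ∀ t ∈ Icc s M, 0 < ψ t ^ ((n - 3) / (n - 1)) * testFunction n s C ψ t ^ 2 :=
    fun t ht => mul_pos (rpow_pos_of_pos (hψ' t ht) _) (pow_pos (testFunction_pos hs hψ' ht) 2)
  have hpq : (n - 2).HolderConjugate ((n - 2) / (n - 3)) := by
    rw [Real.holderConjugate_iff]
    exact ⟨by linarith, by field_simp; ring⟩
  have hHolder := sub_le_integral_mul_integral_rpow_neg hsM.le hpq
    ((hψc'.rpow_const fun t ht => Or.inl (hψ' t ht).ne').mul
      ((continuousOn_testFunction hs hsM.le hψc' hψ').pow 2)) hu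
  rw [show (n - 2) / (n - 3) / (n - 2) = 1 / (n - 3) by field_simp, one_div_div] at hHolder
  have hI := integral_rpow_mul_testFunction_sq_le (by linarith) hs hsM.le hC hψc hψpos hstab
  have hJ := integral_rpow_mul_testFunction_sq_rpow_neg_le hn hs hsM.le hC hψc' hψ'
  have hI_nonneg : 0 ≤ ∫ t in s..M, ψ t ^ ((n - 3) / (n - 1)) * testFunction n s C ψ t ^ 2 :=
    integral_nonneg hsM.le fun t ht => (hu t ht).le
  have hJ_nonneg : 0 ≤ ∫ t in s..M,
      (ψ t ^ ((n - 3) / (n - 1)) * testFunction n s C ψ t ^ 2) ^ (-(1 / (n - 3))) :=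
    integral_nonneg hsM.le fun t ht => (rpow_pos_of_pos (hu t ht) _).le
  exact hHolder.trans (mul_le_mul (rpow_le_rpow hI_nonneg hI (by positivity))
    (rpow_le_rpow hJ_nonneg hJ (by positivity)) (rpow_nonneg hJ_nonneg _)
    (rpow_nonneg (hI_nonneg.trans hI) _))
end

section
/- Let $n > p+q$ with $p>1$, $q\geq 1$, set $p_q^\star = np/(n-(p+q))$, $R>0$, and let $w:[0,R]\to[0,\infty)$ be $C^1$ nonincreasing with $w(R)=0$. Then $\left(\int_0^R w(s)^{p_q^\star} s^{n-1}\,ds\right)^{1/p_q^\star} \leq C(n,p,q) \left(\int_0^R |w'(s)|^p s^{n-1-q}\,ds\right)^{1/p}$ for some constant $C(n,p,q)$ depending only on $n$, $p$, $q$. -/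
/-!
Write `g = w'`, `I = ∫₀ᴿ |g|^p s^(n-1-q)` and `p⋆ = np/(n-(p+q))`. Since `w R = 0`,
`w s = -∫ₛᴿ g`, and Hölder against the weight `t^(n-1-q)` gives the pointwise decay
`w s ≤ K I^(1/p) s^(-(n-(p+q))/p)`. Integrating `(w^p s^(n-p-q))'` over `[0, R]` and applying
Hölder once more gives the Hardy inequality `∫ w^p s^(n-1-p-q) ≤ (p/(n-(p+q)))^p I`.
Finally, splitting `w^p⋆ = w^(p⋆-p) w^p` and using the decay bound on the first factor turns
`w^p⋆ s^(n-1)` into `(K I^(1/p))^(p⋆-p) w^p s^(n-1-p-q)`, which the Hardy inequality controls;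
the powers of `I` add up to `I^(p⋆/p)`.
-/

open Real MeasureTheory Set intervalIntegral

theorem MeasureTheory.Integrable.memLp_ofReal_of_nonneg {α : Type*} [MeasurableSpace α]
    {μ : Measure α} {p : ℝ} {f : α → ℝ} (hp : 0 < p) (hf0 : 0 ≤ᵐ[μ] f)
    (hfm : AEStronglyMeasurable f μ) (hfi : Integrable (fun x => f x ^ p) μ) :
    MemLp f (ENNReal.ofReal p) μ := by
  rw [← integrable_norm_rpow_iff hfm (by simpa using hp) ENNReal.ofReal_ne_top,
    ENNReal.toReal_ofReal hp.le]
  refine hfi.congr ?_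
  filter_upwards [hf0] with x hx
  rw [Real.norm_of_nonneg hx]

theorem MeasureTheory.setIntegral_mul_le_Lp_mul_Lq_of_continuousOn {α : Type*}
    [TopologicalSpace α] [MeasurableSpace α] [OpensMeasurableSpace α] {μ : Measure α}
    {p q : ℝ} (hpq : p.HolderConjugate q) {s : Set α} (hs : MeasurableSet s) {f g : α → ℝ}
    (hf0 : ∀ x ∈ s, 0 ≤ f x) (hg0 : ∀ x ∈ s, 0 ≤ g x) (hf : ContinuousOn f s)
    (hg : ContinuousOn g s) (hfi : IntegrableOn (fun x => f x ^ p) s μ)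
    (hgi : IntegrableOn (fun x => g x ^ q) s μ) :
    ∫ x in s, f x * g x ∂μ ≤
      (∫ x in s, f x ^ p ∂μ) ^ (1 / p) * (∫ x in s, g x ^ q ∂μ) ^ (1 / q) := by
  have hf0' : 0 ≤ᵐ[μ.restrict s] f := ae_restrict_of_forall_mem hs hf0
  have hg0' : 0 ≤ᵐ[μ.restrict s] g := ae_restrict_of_forall_mem hs hg0
  exact integral_mul_le_Lp_mul_Lq_of_nonneg hpq hf0' hg0'
    (hfi.memLp_ofReal_of_nonneg hpq.pos hf0' (hf.aestronglyMeasurable hs))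
    (hgi.memLp_ofReal_of_nonneg hpq.symm.pos hg0' (hg.aestronglyMeasurable hs))

theorem integral_abs_mul_rpow_mul_rpow_le {p a b κ κ₁ κ₂ : ℝ} {u v : ℝ → ℝ} (hp : 1 < p)
    (ha : 0 ≤ a) (hab : a ≤ b) (hκ : κ = κ₁ / p + κ₂ * (p - 1) / p)
    (hu : ContinuousOn u (Icc a b)) (hv : ContinuousOn v (Icc a b))
    (hv0 : ∀ t ∈ Icc a b, 0 ≤ v t)
    (hui : IntervalIntegrable (fun t => |u t| ^ p * t ^ κ₁) volume a b)
    (hvi : IntervalIntegrable (fun t => v t ^ p * t ^ κ₂) volume a b) :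
    ∫ t in a..b, |u t| * v t ^ (p - 1) * t ^ κ ≤
      (∫ t in a..b, |u t| ^ p * t ^ κ₁) ^ (1 / p) *
        (∫ t in a..b, v t ^ p * t ^ κ₂) ^ ((p - 1) / p) := by
  have hp0 : 0 < p := by linarith
  have hp1 : p - 1 ≠ 0 := by linarith
  set f : ℝ → ℝ := fun t => |u t| * t ^ (κ₁ / p)
  set G : ℝ → ℝ := fun t => v t ^ (p - 1) * t ^ (κ₂ * (p - 1) / p)
  have hpos : ∀ t ∈ Ioc a b, 0 < t := fun t ht => ha.trans_lt ht.1
  have hv0' : ∀ t ∈ Ioc a b, 0 ≤ v t := fun t ht => hv0 t (Ioc_subset_Icc_self ht)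
  have hfG : EqOn (fun t => f t * G t) (fun t => |u t| * v t ^ (p - 1) * t ^ κ) (Ioc a b) :=
    fun t ht => by
      simp only [f, G]
      rw [hκ, rpow_add (hpos t ht)]
      ring
  have hfp : EqOn (fun t => f t ^ p) (fun t => |u t| ^ p * t ^ κ₁) (Ioc a b) := fun t ht => by
    simp only [f]
    rw [mul_rpow (abs_nonneg _) (rpow_nonneg (hpos t ht).le _), ← rpow_mul (hpos t ht).le,
      div_mul_cancel₀ _ hp0.ne']
  have hGq : EqOn (fun t => G t ^ conjExponent p) (fun t => v t ^ p * t ^ κ₂) (Ioc a b) :=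
    fun t ht => by
      simp only [G, conjExponent]
      rw [mul_rpow (rpow_nonneg (hv0' t ht) _) (rpow_nonneg (hpos t ht).le _),
        ← rpow_mul (hv0' t ht), ← rpow_mul (hpos t ht).le]
      congr 2 <;> field_simp
  rw [intervalIntegrable_iff_integrableOn_Ioc_of_le hab] at hui hvi
  simp only [integral_of_le hab]
  rw [← setIntegral_congr_fun measurableSet_Ioc hfG, ← setIntegral_congr_fun measurableSet_Ioc hfp,
    ← setIntegral_congr_fun measurableSet_Ioc hGq, ← one_div_div p (p - 1)]
  exact setIntegral_mul_le_Lp_mul_Lq_of_continuousOn (HolderConjugate.conjExponent hp)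
    measurableSet_Ioc (fun t ht => mul_nonneg (abs_nonneg _) (rpow_nonneg (hpos t ht).le _))
    (fun t ht => mul_nonneg (rpow_nonneg (hv0' t ht) _) (rpow_nonneg (hpos t ht).le _))
    ((hu.mono Ioc_subset_Icc_self).abs.mul
      (continuousOn_id.rpow_const fun t ht => Or.inl (hpos t ht).ne'))
    (((hv.mono Ioc_subset_Icc_self).rpow_const fun _ _ => Or.inr (by linarith)).mul
      (continuousOn_id.rpow_const fun t ht => Or.inl (hpos t ht).ne'))
    (hui.congr_fun hfp.symm measurableSet_Ioc) (hvi.congr_fun hGq.symm measurableSet_Ioc)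

theorem intervalIntegrable_rpow_mul_rpow {w : ℝ → ℝ} {R p γ : ℝ} (hR : 0 ≤ R)
    (hw : ContinuousOn w (Icc 0 R)) (hp : 0 ≤ p) (hγ : -1 < γ) :
    IntervalIntegrable (fun t => w t ^ p * t ^ γ) volume 0 R := by
  refine (intervalIntegrable_rpow' hγ).continuousOn_mul ?_
  rw [uIcc_of_le hR]
  exact hw.rpow_const fun _ _ => Or.inr hp

theorem integral_rpow_neg_le {s R α : ℝ} (hs : 0 < s) (hsR : s ≤ R) (hα : 1 < α) :
    ∫ t in s..R, t ^ (-α) ≤ s ^ (1 - α) / (α - 1) := by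
  have h0 : (0 : ℝ) ∉ uIcc s R := by
    rw [uIcc_of_le hsR]
    exact fun h => hs.not_ge h.1
  rw [integral_rpow (Or.inr ⟨by linarith, h0⟩), show -α + 1 = -(α - 1) by ring,
    div_neg, ← neg_div, neg_sub, sub_div, show -(α - 1) = 1 - α by ring]
  exact sub_le_self _ (div_nonneg (rpow_nonneg (hs.le.trans hsR) _) (by linarith))

theorem rpow_integral_rpow_neg_le {p β s R : ℝ} (hp : 1 < p) (hβ : p - 1 < β) (hs : 0 < s)
    (hsR : s ≤ R) :
    (∫ t in s..R, t ^ (-(β / (p - 1)))) ^ ((p - 1) / p) ≤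
      ((p - 1) / (β - (p - 1))) ^ ((p - 1) / p) * s ^ (-((β - (p - 1)) / p)) := by
  have hp1 : 0 < p - 1 := by linarith
  have hβp : 0 < β - (p - 1) := by linarith
  have hα : 1 < β / (p - 1) := by rw [lt_div_iff₀ hp1]; linarith
  have hquot : s ^ (1 - β / (p - 1)) / (β / (p - 1) - 1) =
      (p - 1) / (β - (p - 1)) * s ^ (1 - β / (p - 1)) := by
    field_simp
  refine (rpow_le_rpow (integral_nonneg hsR fun t ht => rpow_nonneg (hs.trans_le ht.1).le _)
    (integral_rpow_neg_le hs hsR hα) (div_nonneg hp1.le (by linarith))).trans_eq ?_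
  rw [hquot, mul_rpow (div_nonneg hp1.le hβp.le) (rpow_nonneg hs.le _), ← rpow_mul hs.le]
  congr 2
  field_simp
  ring

theorem le_rpow_mul_of_le_mul_rpow_mul_rpow {x y c p : ℝ} (hp : 0 < p) (hx : 0 ≤ x)
    (hy : 0 ≤ y) (hc : 0 ≤ c) (h : x ≤ c * (y ^ (1 / p) * x ^ ((p - 1) / p))) :
    x ≤ c ^ p * y := by
  rcases hx.eq_or_lt with rfl | hx
  · positivity
  have hsplit : x ^ (1 / p) * x ^ ((p - 1) / p) = x := by
    rw [← rpow_add hx, ← add_div, add_sub_cancel, div_self hp.ne', rpow_one]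
  have hroot : x ^ (1 / p) ≤ c * y ^ (1 / p) := by
    refine le_of_mul_le_mul_right ?_ (rpow_pos_of_pos hx ((p - 1) / p))
    rwa [hsplit, mul_assoc]
  calc x = (x ^ (1 / p)) ^ p := by rw [← rpow_mul hx.le, one_div_mul_cancel hp.ne', rpow_one]
    _ ≤ (c * y ^ (1 / p)) ^ p := rpow_le_rpow (rpow_nonneg hx.le _) hroot hp.le
    _ = c ^ p * y := by
      rw [mul_rpow hc (rpow_nonneg hy _), ← rpow_mul hy, one_div_mul_cancel hp.ne', rpow_one]

theorem rpow_add_mul_rpow_le_of_le_mul_rpow {x t M a r δ κ : ℝ} (hx : 0 ≤ x) (ht : 0 < t)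
    (ha : 0 < a) (hr : 0 ≤ r) (hxM : x ≤ M * t ^ (-δ)) :
    x ^ (a + r) * t ^ κ ≤ M ^ r * (x ^ a * t ^ (κ - δ * r)) := by
  have hM : 0 ≤ M := nonneg_of_mul_nonneg_left (hx.trans hxM) (rpow_pos_of_pos ht _)
  have hxr : x ^ r ≤ M ^ r * t ^ (-(δ * r)) :=
    calc x ^ r ≤ (M * t ^ (-δ)) ^ r := rpow_le_rpow hx hxM hr
      _ = M ^ r * t ^ (-(δ * r)) := by
        rw [mul_rpow hM (rpow_nonneg ht.le _), ← rpow_mul ht.le, neg_mul]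
  calc x ^ (a + r) * t ^ κ = x ^ r * (x ^ a * t ^ κ) := by
        rw [rpow_add' hx (by linarith)]
        ring
    _ ≤ M ^ r * t ^ (-(δ * r)) * (x ^ a * t ^ κ) :=
        mul_le_mul_of_nonneg_right hxr (mul_nonneg (rpow_nonneg hx _) (rpow_nonneg ht.le _))
    _ = M ^ r * (x ^ a * t ^ (κ - δ * r)) := by
        rw [sub_eq_neg_add, rpow_add ht]
        ring

section Profile

variable {w g : ℝ → ℝ}

theorem abs_le_mul_rpow_of_hasDerivAt {p β s R : ℝ} (hp : 1 < p) (hβ : p - 1 < β) (hs : 0 < s)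
    (hsR : s ≤ R) (hw : ContinuousOn w (Icc s R)) (hg : ContinuousOn g (Icc s R))
    (hderiv : ∀ t ∈ Ioo s R, HasDerivAt w (g t) t) (hwR : w R = 0) :
    |w s| ≤ ((p - 1) / (β - (p - 1))) ^ ((p - 1) / p) *
      (∫ t in s..R, |g t| ^ p * t ^ β) ^ (1 / p) * s ^ (-((β - (p - 1)) / p)) := by
  have hp0 : 0 < p := by linarith
  have hp1 : p - 1 ≠ 0 := by linarith
  have hpos : ∀ t ∈ Icc s R, 0 < t := fun t ht => hs.trans_le ht.1
  have hftc : ∫ t in s..R, g t = w R - w s :=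
    integral_eq_sub_of_hasDerivAt_of_le hsR hw hderiv (hg.intervalIntegrable_of_Icc hsR)
  have hws : |w s| ≤ ∫ t in s..R, |g t| := by
    rw [← abs_neg, ← zero_sub, ← hwR, ← hftc]
    exact abs_integral_le_integral_abs hsR
  have hholder := integral_abs_mul_rpow_mul_rpow_le (κ := 0) (κ₁ := β)
    (κ₂ := -(β / (p - 1))) (v := fun _ => 1) hp hs.le hsR (by field_simp; ring) hg
    continuousOn_const (fun _ _ => zero_le_one)
    (((hg.abs.rpow_const fun _ _ => Or.inr hp0.le).mul (continuousOn_id.rpow_const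
      fun t ht => Or.inl (hpos t ht).ne')).intervalIntegrable_of_Icc hsR)
    ((continuousOn_const.mul (continuousOn_id.rpow_const fun t ht =>
      Or.inl (hpos t ht).ne')).intervalIntegrable_of_Icc hsR)
  simp only [one_rpow, mul_one, rpow_zero, one_mul] at hholder
  have hI0 : 0 ≤ ∫ t in s..R, |g t| ^ p * t ^ β := integral_nonneg hsR fun t ht =>
    mul_nonneg (rpow_nonneg (abs_nonneg _) _) (rpow_nonneg (hpos t ht).le _)
  calc |w s| ≤ _ := hws.trans hholder
    _ ≤ _ := by
      rw [mul_comm (_ ^ ((p - 1) / p) : ℝ), mul_assoc]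
      exact mul_le_mul_of_nonneg_left (rpow_integral_rpow_neg_le hp hβ hs hsR)
        (rpow_nonneg hI0 _)

variable {p γ R : ℝ}

theorem abs_le_mul_rpow_of_hasDerivAt_Icc {β s : ℝ} (hp : 1 < p) (hβ : p - 1 < β)
    (hw : ContinuousOn w (Icc 0 R)) (hg : ContinuousOn g (Icc 0 R))
    (hderiv : ∀ t ∈ Ioo 0 R, HasDerivAt w (g t) t) (hwR : w R = 0) (hs : s ∈ Ioc 0 R) :
    |w s| ≤ ((p - 1) / (β - (p - 1))) ^ ((p - 1) / p) *
      (∫ t in 0..R, |g t| ^ p * t ^ β) ^ (1 / p) * s ^ (-((β - (p - 1)) / p)) := by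
  have hp0 : 0 < p := by linarith
  have hsub : Icc s R ⊆ Icc 0 R := Icc_subset_Icc hs.1.le le_rfl
  have hnonneg : ∀ t, 0 ≤ t → 0 ≤ |g t| ^ p * t ^ β := fun t ht =>
    mul_nonneg (rpow_nonneg (abs_nonneg _) _) (rpow_nonneg ht _)
  have htail : ∫ t in s..R, |g t| ^ p * t ^ β ≤ ∫ t in 0..R, |g t| ^ p * t ^ β :=
    integral_mono_interval hs.1.le hs.2 le_rfl
      (ae_restrict_of_forall_mem measurableSet_Ioc fun t ht => hnonneg t ht.1.le)
      (((hg.abs.rpow_const fun _ _ => Or.inr hp0.le).mul (continuousOn_id.rpow_const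
        fun _ _ => Or.inr (by linarith))).intervalIntegrable_of_Icc (hs.1.le.trans hs.2))
  have htail0 : 0 ≤ ∫ t in s..R, |g t| ^ p * t ^ β :=
    integral_nonneg hs.2 fun t ht => hnonneg t (hs.1.le.trans ht.1)
  refine (abs_le_mul_rpow_of_hasDerivAt hp hβ hs.1 hs.2 (hw.mono hsub) (hg.mono hsub)
    (fun t ht => hderiv t ⟨hs.1.trans ht.1, ht.2⟩) hwR).trans ?_
  exact mul_le_mul_of_nonneg_right (mul_le_mul_of_nonneg_left
    (rpow_le_rpow htail0 htail (by positivity)) (by positivity)) (rpow_nonneg hs.1.le _)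

theorem integral_rpow_mul_rpow_eq_neg_integral (hp : 1 ≤ p) (hγ : -1 < γ) (hR : 0 ≤ R)
    (hw : ContinuousOn w (Icc 0 R)) (hg : ContinuousOn g (Icc 0 R))
    (hderiv : ∀ t ∈ Ioo 0 R, HasDerivAt w (g t) t) (hwR : w R = 0) :
    (γ + 1) * ∫ t in 0..R, w t ^ p * t ^ γ =
      -(p * ∫ t in 0..R, w t ^ (p - 1) * g t * t ^ (γ + 1)) := by
  have hγ1 : 0 < γ + 1 := by linarith
  have hFderiv : ∀ t ∈ Ioo 0 R, HasDerivAt (fun x => w x ^ p * x ^ (γ + 1))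
      (p * (w t ^ (p - 1) * g t * t ^ (γ + 1)) + (γ + 1) * (w t ^ p * t ^ γ)) t := by
    intro t ht
    refine (((hderiv t ht).rpow_const (Or.inr hp)).mul
      (hasDerivAt_rpow_const (p := γ + 1) (Or.inl ht.1.ne'))).congr_deriv ?_
    rw [add_sub_cancel_right]
    ring
  have hFcont : ContinuousOn (fun x => w x ^ p * x ^ (γ + 1)) (Icc 0 R) :=
    (hw.rpow_const fun _ _ => Or.inr (by linarith)).mul
      (continuousOn_id.rpow_const fun _ _ => Or.inr hγ1.le)
  have hAint : IntervalIntegrable (fun t => w t ^ (p - 1) * g t * t ^ (γ + 1)) volume 0 R :=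
    (((hw.rpow_const fun _ _ => Or.inr (by linarith)).mul hg).mul
      (continuousOn_id.rpow_const fun _ _ => Or.inr hγ1.le)).intervalIntegrable_of_Icc hR
  have hBint := intervalIntegrable_rpow_mul_rpow hR hw (by linarith : 0 ≤ p) hγ
  have hftc := integral_eq_sub_of_hasDerivAt_of_le hR hFcont hFderiv
    ((hAint.const_mul p).add (hBint.const_mul (γ + 1)))
  rw [integral_add (hAint.const_mul p) (hBint.const_mul (γ + 1)),
    intervalIntegral.integral_const_mul, intervalIntegral.integral_const_mul, hwR,
    zero_rpow (by linarith), zero_rpow hγ1.ne'] at hftc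
  linarith

theorem integral_rpow_mul_rpow_le_hardy (hp : 1 < p) (hγ : -1 < γ) (hR : 0 ≤ R)
    (hw : ContinuousOn w (Icc 0 R)) (hg : ContinuousOn g (Icc 0 R))
    (hderiv : ∀ t ∈ Ioo 0 R, HasDerivAt w (g t) t) (hw0 : ∀ t ∈ Icc 0 R, 0 ≤ w t)
    (hwR : w R = 0) :
    ∫ t in 0..R, w t ^ p * t ^ γ ≤ (p / (γ + 1)) ^ p * ∫ t in 0..R, |g t| ^ p * t ^ (γ + p) := by
  have hp0 : 0 < p := by linarith
  have hγ1 : 0 < γ + 1 := by linarith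
  set J := ∫ t in 0..R, w t ^ p * t ^ γ
  set I := ∫ t in 0..R, |g t| ^ p * t ^ (γ + p)
  have hJ0 : 0 ≤ J := integral_nonneg hR fun t ht =>
    mul_nonneg (rpow_nonneg (hw0 t ht) _) (rpow_nonneg ht.1 _)
  have hI0 : 0 ≤ I := integral_nonneg hR fun t ht =>
    mul_nonneg (rpow_nonneg (abs_nonneg _) _) (rpow_nonneg ht.1 _)
  have hholder := integral_abs_mul_rpow_mul_rpow_le (κ := γ + 1) (κ₁ := γ + p) (κ₂ := γ) hp
    le_rfl hR (by field_simp; ring) hg hw hw0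
    (((hg.abs.rpow_const fun _ _ => Or.inr hp0.le).mul (continuousOn_id.rpow_const
      fun _ _ => Or.inr (by linarith))).intervalIntegrable_of_Icc hR)
    (intervalIntegrable_rpow_mul_rpow hR hw hp0.le hγ)
  have hJle : J ≤ p / (γ + 1) * (I ^ (1 / p) * J ^ ((p - 1) / p)) := by
    rw [div_mul_eq_mul_div, le_div_iff₀ hγ1, mul_comm J,
      integral_rpow_mul_rpow_eq_neg_integral hp.le hγ hR hw hg hderiv hwR, ← mul_neg]
    refine mul_le_mul_of_nonneg_left (le_trans ?_ hholder) hp0.le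
    refine (neg_le_abs _).trans ((abs_integral_le_integral_abs hR).trans_eq
      (integral_congr fun t ht => ?_))
    rw [uIcc_of_le hR] at ht
    simp only [abs_mul, abs_of_nonneg (rpow_nonneg (hw0 t ht) _),
      abs_of_nonneg (rpow_nonneg ht.1 _)]
    ring
  exact le_rpow_mul_of_le_mul_rpow_mul_rpow hp0 hJ0 hI0 (div_nonneg hp0.le hγ1.le) hJle

theorem integral_rpow_add_mul_rpow_le_of_le_mul_rpow {r δ κ M : ℝ} (hR : 0 ≤ R)
    (hw : ContinuousOn w (Icc 0 R)) (hw0 : ∀ t ∈ Icc 0 R, 0 ≤ w t) (hp : 0 < p) (hr : 0 ≤ r)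
    (hκ : -1 < κ) (hκδ : -1 < κ - δ * r) (hdecay : ∀ t ∈ Ioo 0 R, w t ≤ M * t ^ (-δ)) :
    ∫ t in 0..R, w t ^ (p + r) * t ^ κ ≤ M ^ r * ∫ t in 0..R, w t ^ p * t ^ (κ - δ * r) := by
  rw [← intervalIntegral.integral_const_mul]
  exact integral_mono_on_of_le_Ioo hR
    (intervalIntegrable_rpow_mul_rpow hR hw (by linarith) hκ)
    ((intervalIntegrable_rpow_mul_rpow hR hw hp.le hκδ).const_mul _) fun t ht =>
      rpow_add_mul_rpow_le_of_le_mul_rpow (hw0 t (Ioo_subset_Icc_self ht)) ht.1 hp hr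
        (hdecay t ht)

end Profile

/-- The exponent `p_q^⋆`. -/
noncomputable def sobolevExponent (n p q : ℝ) : ℝ := n * p / (n - (p + q))

/-- Not the sharp constant: the decay constant of `abs_le_mul_rpow_of_hasDerivAt` raised to
`p_q^⋆ - p`, times the Hardy constant `(p / (n - (p + q))) ^ p`, to the power `1 / p_q^⋆`. -/
noncomputable def sobolevConst (n p q : ℝ) : ℝ :=
  ((((p - 1) / (n - (p + q))) ^ ((p - 1) / p)) ^ (sobolevExponent n p q - p) *
    (p / (n - (p + q))) ^ p) ^ (sobolevExponent n p q)⁻¹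

theorem sobolevExponent_sub {n p q : ℝ} (hn : p + q < n) :
    sobolevExponent n p q - p = p * (p + q) / (n - (p + q)) := by
  have : n - (p + q) ≠ 0 := by linarith
  rw [sobolevExponent]
  field_simp
  ring

theorem lt_sobolevExponent {n p q : ℝ} (hp : 0 < p) (hpq : 0 < p + q) (hn : p + q < n) :
    p < sobolevExponent n p q := by
  have := sobolevExponent_sub hn
  have : 0 < p * (p + q) / (n - (p + q)) := div_pos (by positivity) (by linarith)
  linarith

theorem sobolevConst_pos {n p q : ℝ} (hp : 1 < p) (hn : p + q < n) :
    0 < sobolevConst n p q := by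
  have hd : 0 < n - (p + q) := by linarith
  have : 0 < (p - 1) / (n - (p + q)) := div_pos (by linarith) hd
  have : 0 < p / (n - (p + q)) := div_pos (by linarith) hd
  unfold sobolevConst
  positivity

theorem integral_rpow_sobolevExponent_le {n p q R : ℝ} {w g : ℝ → ℝ} (hp : 1 < p)
    (hpq : 0 < p + q) (hn : p + q < n) (hR : 0 ≤ R)
    (hw : ContinuousOn w (Icc 0 R)) (hg : ContinuousOn g (Icc 0 R))
    (hderiv : ∀ t ∈ Ioo 0 R, HasDerivAt w (g t) t) (hw0 : ∀ t ∈ Icc 0 R, 0 ≤ w t)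
    (hwR : w R = 0) :
    ∫ t in 0..R, w t ^ sobolevExponent n p q * t ^ (n - 1) ≤
      (sobolevConst n p q * (∫ t in 0..R, |g t| ^ p * t ^ (n - 1 - q)) ^ (1 / p)) ^
        sobolevExponent n p q := by
  have hp0 : 0 < p := by linarith
  have hd : 0 < n - (p + q) := by linarith
  set P := sobolevExponent n p q
  have hPp : 0 < P - p := sub_pos.2 (lt_sobolevExponent hp0 hpq hn)
  set K := ((p - 1) / (n - (p + q))) ^ ((p - 1) / p)
  set I := ∫ t in 0..R, |g t| ^ p * t ^ (n - 1 - q)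
  have hI0 : 0 ≤ I := integral_nonneg hR fun t ht =>
    mul_nonneg (rpow_nonneg (abs_nonneg _) _) (rpow_nonneg ht.1 _)
  have hY0 : 0 ≤ I ^ (1 / p) := rpow_nonneg hI0 _
  have hdecay : ∀ t ∈ Ioo 0 R, w t ≤ K * I ^ (1 / p) * t ^ (-((n - (p + q)) / p)) := by
    intro t ht
    have h := abs_le_mul_rpow_of_hasDerivAt_Icc (β := n - 1 - q) hp (by linarith) hw hg
      hderiv hwR (Ioo_subset_Ioc_self ht)
    rw [show n - 1 - q - (p - 1) = n - (p + q) by ring] at h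
    exact (le_abs_self _).trans h
  have hweight : n - 1 - (n - (p + q)) / p * (P - p) = n - 1 - p - q := by
    rw [sobolevExponent_sub hn]
    field_simp
    ring
  have hcompare := integral_rpow_add_mul_rpow_le_of_le_mul_rpow (κ := n - 1) hR hw hw0 hp0
    hPp.le (by linarith) (by rw [hweight]; linarith) hdecay
  have hhardy := integral_rpow_mul_rpow_le_hardy (γ := n - 1 - p - q) hp (by linarith) hR
    hw hg hderiv hw0 hwR
  rw [add_sub_cancel, hweight] at hcompare
  rw [show n - 1 - p - q + 1 = n - (p + q) by ring,
    show n - 1 - p - q + p = n - 1 - q by ring] at hhardy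
  calc _ ≤ (K * I ^ (1 / p)) ^ (P - p) * ((p / (n - (p + q))) ^ p * I) :=
        hcompare.trans (mul_le_mul_of_nonneg_left hhardy (by positivity))
    _ = K ^ (P - p) * (p / (n - (p + q))) ^ p * ((I ^ (1 / p)) ^ (P - p) * (I ^ (1 / p)) ^ p) := by
        rw [mul_rpow (by positivity) hY0, ← rpow_mul hI0 (1 / p) p,
          one_div_mul_cancel hp0.ne', rpow_one]
        ring
    _ = (sobolevConst n p q * I ^ (1 / p)) ^ P := by
        rw [← rpow_add' hY0 (by simp; linarith), sub_add_cancel,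
          mul_rpow (sobolevConst_pos hp hn).le hY0, sobolevConst,
          rpow_inv_rpow (by positivity) (by linarith)]

/-- One-dimensional weighted Hardy–Sobolev inequality for radial profiles in the
subcritical case `n > p + q`, with `p_q⋆ = np/(n-(p+q))` and a constant depending
only on `n`, `p`, `q`. -/
theorem stmt14 (n p q : ℝ) (hp : 1 < p) (hq : 1 ≤ q) (hn : p + q < n) :
    ∃ C > (0 : ℝ), ∀ R : ℝ, 0 < R → ∀ w : ℝ → ℝ,
      ContDiffOn ℝ 1 w (Set.Icc 0 R) → AntitoneOn w (Set.Icc 0 R) →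
      (∀ s ∈ Set.Icc (0 : ℝ) R, 0 ≤ w s) → w R = 0 →
      (∫ s in (0 : ℝ)..R, w s ^ (n * p / (n - (p + q))) * s ^ (n - 1)) ^
          ((n - (p + q)) / (n * p)) ≤
        C * (∫ s in (0 : ℝ)..R,
          |derivWithin w (Set.Icc 0 R) s| ^ p * s ^ (n - 1 - q)) ^ (1 / p) := by
  refine ⟨sobolevConst n p q, sobolevConst_pos hp hn, fun R hR w hw _ hw0 hwR => ?_⟩
  have hP : 0 < sobolevExponent n p q :=
    (zero_lt_one.trans hp).trans (lt_sobolevExponent (by linarith) (by linarith) hn)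
  have h := integral_rpow_sobolevExponent_le hp (by linarith) hn hR.le hw.continuousOn
    (hw.continuousOn_derivWithin (uniqueDiffOn_Icc hR) le_rfl)
    (fun t ht => ((hw.differentiableOn one_ne_zero) t (Ioo_subset_Icc_self ht)).hasDerivWithinAt
      |>.hasDerivAt (Icc_mem_nhds ht.1 ht.2)) hw0 hwR
  rw [show (n - (p + q)) / (n * p) = (sobolevExponent n p q)⁻¹ from (inv_div _ _).symm]
  refine (rpow_le_rpow (integral_nonneg hR.le fun t ht => ?_) h (inv_nonneg.2 hP.le)).trans_eq
    (rpow_rpow_inv (mul_nonneg (sobolevConst_pos hp hn).le (rpow_nonneg ?_ _)) hP.ne')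
  · exact mul_nonneg (rpow_nonneg (hw0 t ht) _) (rpow_nonneg ht.1 _)
  · exact integral_nonneg hR.le fun t ht =>
      mul_nonneg (rpow_nonneg (abs_nonneg _) _) (rpow_nonneg ht.1 _)
end
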